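/- Let μ* be an upper density on ℕ with conjugate μ_*(X) := 1 − μ*(ℕ ∖ X), and for every positive integer k and S ⊆ ℕ let w_k(S) be the number of residues h ∈ {0, …, k−1} such that μ*(S ∩ (k·ℕ + h)) ≠ 0. Let X ⊆ ℕ and let (k_n)_{n ≥ 1} be a sequence of pairwise coprime positive integers. Then w_k(X) ≤ r_k(X) for every positive integer k, and for every n ≥ 1 one has ∏_{i=1}^{n} (1 − w_{k_i}(ℕ ∖ X)/k_i) ≤ μ_*(X) ≤ μ*(X) ≤ ∏_{i=1}^{n} w_{k_i}(X)/k_i. -/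

import Mathlib

open Set Filter Topology

/-- An upper quasi-density on ℕ. -/
def IsUpperQuasiDensity (μ : Set ℕ → ℝ) : Prop :=
  μ Set.univ = 1 ∧
  (∀ X : Set ℕ, μ X ≤ 1) ∧
  (∀ X Y : Set ℕ, μ (X ∪ Y) ≤ μ X + μ Y) ∧
  (∀ (X : Set ℕ) (k : ℕ), 0 < k → μ ((fun x => k * x) '' X) = μ X / k) ∧
  (∀ (X : Set ℕ) (h : ℕ), μ ((fun x => x + h) '' X) = μ X)

/-- An upper density on ℕ: a monotone upper quasi-density. -/
def IsUpperDensity (μ : Set ℕ → ℝ) : Prop :=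
  IsUpperQuasiDensity μ ∧ ∀ X Y : Set ℕ, X ⊆ Y → μ X ≤ μ Y

/-- A set of naturals is small if every upper quasi-density vanishes on it. -/
def SmallSet (X : Set ℕ) : Prop :=
  ∀ μ : Set ℕ → ℝ, IsUpperQuasiDensity μ → μ X = 0

/-- The upper asymptotic density of a set of naturals. -/
noncomputable def upperAsymptoticDensity (X : Set ℕ) : ℝ :=
  limsup (fun n : ℕ => ((X ∩ Set.Icc 1 n).ncard : ℝ) / n) atTop

/-- The arithmetic progression k·ℕ + h. -/
def AP (k h : ℕ) : Set ℕ := {x : ℕ | ∃ m : ℕ, x = k * m + h}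

/-- A finite union of arithmetic progressions of ℕ. -/
def IsFinUnionAP (A : Set ℕ) : Prop :=
  ∃ s : Finset (ℕ × ℕ), (∀ p ∈ s, 0 < p.1) ∧ A = ⋃ p ∈ s, AP p.1 p.2

/-- The upper Buck density of a set of naturals. -/
noncomputable def buckDensity (X : Set ℕ) : ℝ :=
  sInf {d : ℝ | ∃ A : Set ℕ, IsFinUnionAP A ∧ X ⊆ A ∧ d = upperAsymptoticDensity A}

/-- `rk k X` is the number of residues h ∈ [0, k-1] with X ∩ (k·ℕ + h) ≠ ∅. -/
noncomputable def rk (k : ℕ) (X : Set ℕ) : ℕ :=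
  {h : ℕ | h < k ∧ (X ∩ AP k h).Nonempty}.ncard

/-- `wk μ k S` is the number of residues h ∈ [0, k-1] with μ(S ∩ (k·ℕ + h)) ≠ 0. -/
noncomputable def wk (μ : Set ℕ → ℝ) (k : ℕ) (S : Set ℕ) : ℕ :=
  {h : ℕ | h < k ∧ μ (S ∩ AP k h) ≠ 0}.ncard

/-!
Cover `X` by its traces on the residue classes modulo `q`. Each class has upper density `1/q`,
so subadditivity and monotonicity give `μ* X ≤ w_q(X) / q`. For coprime `a, b`, a class modulo
`ab` on which `X` has positive density lies inside such classes modulo `a` and modulo `b`, and by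
the Chinese remainder theorem it is determined by them; hence `w_{ab} ≤ w_a w_b`, and along
pairwise coprime moduli the bound for `q = k_1 ⋯ k_n` splits into the product. The lower bound is
the upper bound for `ℕ ∖ X` combined with `∏ (1 - a_i) + ∏ a_i ≤ 1` for `a_i ∈ [0, 1]`.
-/

open Finset Function

theorem prod_one_sub_le_one_sub_prod {R ι : Type*} [CommRing R] [PartialOrder R]
    [IsOrderedRing R] {s : Finset ι} (hs : s.Nonempty) {a : ι → R}
    (ha₀ : ∀ i ∈ s, 0 ≤ a i) (ha₁ : ∀ i ∈ s, a i ≤ 1) :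
    ∏ i ∈ s, (1 - a i) ≤ 1 - ∏ i ∈ s, a i := by
  obtain ⟨i, hi⟩ := hs
  have h := prod_add_prod_le (f := fun _ ↦ (1 : R)) hi (by simp)
    (fun j hj _ ↦ sub_le_self _ (ha₀ j hj)) (fun j hj _ ↦ ha₁ j hj)
    (fun j hj ↦ sub_nonneg.mpr (ha₁ j hj)) ha₀
  rw [prod_const_one] at h
  exact le_sub_iff_add_le.mpr h

theorem mem_AP_mod (q x : ℕ) : x ∈ AP q (x % q) :=
  ⟨x / q, (Nat.div_add_mod x q).symm⟩

theorem AP_mul_subset (a b r : ℕ) : AP (a * b) r ⊆ AP a (r % a) := by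
  rintro x ⟨m, rfl⟩
  refine ⟨b * m + r / a, ?_⟩
  conv_lhs => rw [← Nat.div_add_mod r a]
  ring

theorem biUnion_inter_AP {q : ℕ} (hq : 0 < q) (X : Set ℕ) :
    ⋃ h ∈ range q, X ∩ AP q h = X := by
  ext x
  simp only [mem_iUnion, Finset.mem_range, mem_inter_iff, exists_prop]
  exact ⟨fun ⟨_, _, hx, _⟩ ↦ hx, fun hx ↦ ⟨x % q, Nat.mod_lt x hq, hx, mem_AP_mod q x⟩⟩

theorem wk_eq_card_filter (μ : Set ℕ → ℝ) (q : ℕ) (X : Set ℕ) :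
    wk μ q X = #{h ∈ range q | μ (X ∩ AP q h) ≠ 0} := by
  rw [wk, ← Set.ncard_coe_finset]
  congr 1
  ext h
  simp

theorem wk_le_self (μ : Set ℕ → ℝ) (q : ℕ) (X : Set ℕ) : wk μ q X ≤ q := by
  rw [wk_eq_card_filter]
  exact (card_filter_le _ _).trans (card_range q).le

theorem wk_le_rk {μ : Set ℕ → ℝ} (h₀ : μ ∅ = 0) (q : ℕ) (X : Set ℕ) : wk μ q X ≤ rk q X := by
  refine Set.ncard_le_ncard (fun h ⟨hq, hμ⟩ ↦ ⟨hq, ?_⟩) ((Set.finite_Iio q).subset fun h hh ↦ hh.1)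
  rw [Set.nonempty_iff_ne_empty]
  rintro he
  exact hμ (he ▸ h₀)

namespace IsUpperQuasiDensity

variable {μ : Set ℕ → ℝ}

theorem apply_empty (hμ : IsUpperQuasiDensity μ) : μ ∅ = 0 := by
  have h := hμ.2.2.2.1 ∅ 2 two_pos
  rw [Set.image_empty] at h
  linarith

theorem apply_AP (hμ : IsUpperQuasiDensity μ) {q : ℕ} (hq : 0 < q) (r : ℕ) :
    μ (AP q r) = 1 / q := by
  have e : AP q r = (fun x ↦ x + r) '' ((fun x ↦ q * x) '' univ) := by
    ext x
    simp [AP, eq_comm]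
  rw [e, hμ.2.2.2.2, hμ.2.2.2.1 _ q hq, hμ.1]

theorem one_sub_apply_compl_le (hμ : IsUpperQuasiDensity μ) (X : Set ℕ) : 1 - μ Xᶜ ≤ μ X := by
  have h := hμ.2.2.1 X Xᶜ
  rw [union_compl_self, hμ.1] at h
  linarith

end IsUpperQuasiDensity

namespace IsUpperDensity

variable {μ : Set ℕ → ℝ}

theorem apply_ne_zero_of_subset (hμ : IsUpperDensity μ) {A B : Set ℕ} (hAB : A ⊆ B)
    (hA : μ A ≠ 0) : μ B ≠ 0 := by
  have h₀ := hμ.2 ∅ A (empty_subset A)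
  rw [hμ.1.apply_empty] at h₀
  exact ((lt_of_le_of_ne h₀ hA.symm).trans_le (hμ.2 A B hAB)).ne'

theorem le_wk_div (hμ : IsUpperDensity μ) (X : Set ℕ) {q : ℕ} (hq : 0 < q) :
    μ X ≤ wk μ q X / q := by
  calc μ X = μ (⋃ h ∈ range q, X ∩ AP q h) := by rw [biUnion_inter_AP hq]
    _ ≤ ∑ h ∈ range q, μ (X ∩ AP q h) :=
        apply_union_le_sum hμ.1.apply_empty (hμ.1.2.2.1 _ _) _
    _ = ∑ h ∈ range q with μ (X ∩ AP q h) ≠ 0, μ (X ∩ AP q h) := (sum_filter_ne_zero _).symm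
    _ ≤ wk μ q X • (1 / q : ℝ) := by
        rw [wk_eq_card_filter]
        refine sum_le_card_nsmul _ _ _ fun h _ ↦ ?_
        exact hμ.1.apply_AP hq h ▸ hμ.2 _ _ inter_subset_right
    _ = wk μ q X / q := by rw [nsmul_eq_mul, mul_one_div]

theorem wk_mul_le (hμ : IsUpperDensity μ) (X : Set ℕ) {a b : ℕ} (hab : Nat.Coprime a b) :
    wk μ (a * b) X ≤ wk μ a X * wk μ b X := by
  have hcls : ∀ {c d r : ℕ}, r < c * d → μ (X ∩ AP (c * d) r) ≠ 0 →
      r % c < c ∧ μ (X ∩ AP c (r % c)) ≠ 0 := fun {c d r} hr hμr ↦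
    ⟨Nat.mod_lt r (Nat.pos_of_ne_zero (by rintro rfl; simp at hr)),
      hμ.apply_ne_zero_of_subset (inter_subset_inter_right X (AP_mul_subset c d r)) hμr⟩
  rw [wk, wk, wk, ← Set.ncard_prod]
  refine Set.ncard_le_ncard_of_injOn (fun r ↦ (r % a, r % b)) ?_ ?_
    (((Set.finite_Iio a).subset fun h hh ↦ hh.1).prod ((Set.finite_Iio b).subset fun h hh ↦ hh.1))
  · rintro r ⟨hr, hμr⟩
    exact ⟨hcls hr hμr, hcls (d := a) (mul_comm a b ▸ hr) (mul_comm a b ▸ hμr)⟩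
  · rintro r ⟨hr, -⟩ s ⟨hs, -⟩ hrs
    have hmod : r ≡ s [MOD a * b] :=
      (Nat.modEq_and_modEq_iff_modEq_mul hab).mp ⟨congrArg Prod.fst hrs, congrArg Prod.snd hrs⟩
    exact hmod.eq_of_lt_of_lt hr hs

theorem wk_prod_le (hμ : IsUpperDensity μ) (X : Set ℕ) {ι : Type*} (k : ι → ℕ) (s : Finset ι)
    (hcop : (s : Set ι).Pairwise (Nat.Coprime on k)) :
    wk μ (∏ i ∈ s, k i) X ≤ ∏ i ∈ s, wk μ (k i) X := by
  classical
  induction s using Finset.induction_on with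
  | empty => simpa using wk_le_self μ 1 X
  | @insert i s hi ih =>
    rw [prod_insert hi, prod_insert hi]
    have hi_cop : Nat.Coprime (k i) (∏ j ∈ s, k j) :=
      Nat.Coprime.prod_right fun j hj ↦
        hcop (mem_insert_self i s) (mem_insert_of_mem hj) (ne_of_mem_of_not_mem hj hi).symm
    exact (hμ.wk_mul_le X hi_cop).trans
      (Nat.mul_le_mul_left _ (ih (hcop.mono (by simp))))

theorem le_prod_wk_div (hμ : IsUpperDensity μ) (X : Set ℕ) {ι : Type*} (k : ι → ℕ)
    (s : Finset ι) (hpos : ∀ i ∈ s, 0 < k i) (hcop : (s : Set ι).Pairwise (Nat.Coprime on k)) :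
    μ X ≤ ∏ i ∈ s, (wk μ (k i) X : ℝ) / k i := by
  have hwk : (wk μ (∏ i ∈ s, k i) X : ℝ) ≤ ∏ i ∈ s, (wk μ (k i) X : ℝ) := by
    exact_mod_cast hμ.wk_prod_le X k s hcop
  calc μ X ≤ wk μ (∏ i ∈ s, k i) X / (∏ i ∈ s, k i : ℕ) := hμ.le_wk_div X (prod_pos hpos)
    _ ≤ (∏ i ∈ s, (wk μ (k i) X : ℝ)) / ∏ i ∈ s, (k i : ℝ) := by
        rw [Nat.cast_prod]
        gcongr
    _ = ∏ i ∈ s, (wk μ (k i) X : ℝ) / k i := (prod_div_distrib _ _).symm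

end IsUpperDensity

/-- For an upper density μ* on ℕ with conjugate μ_*, a set X and a sequence of
pairwise coprime positive integers (k_n): w_k(X) ≤ r_k(X) for every positive k,
and ∏_{i=1}^n (1 - w_{k_i}(ℕ∖X)/k_i) ≤ μ_*(X) ≤ μ*(X) ≤ ∏_{i=1}^n w_{k_i}(X)/k_i. -/
theorem modular_criterion_bounds (μ : Set ℕ → ℝ) (hμ : IsUpperDensity μ)
    (X : Set ℕ) (k : ℕ → ℕ) (hpos : ∀ n, 0 < k n)
    (hcop : ∀ m n, m ≠ n → Nat.Coprime (k m) (k n)) :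
    (∀ q : ℕ, 0 < q → wk μ q X ≤ rk q X) ∧
    ∀ n : ℕ, 0 < n →
      (∏ i ∈ Finset.range n, (1 - (wk μ (k i) Xᶜ : ℝ) / (k i : ℝ)) ≤ 1 - μ Xᶜ) ∧
      (1 - μ Xᶜ ≤ μ X) ∧
      (μ X ≤ ∏ i ∈ Finset.range n, (wk μ (k i) X : ℝ) / (k i : ℝ)) := by
  refine ⟨fun q _ ↦ wk_le_rk hμ.1.apply_empty q X, fun n hn ↦ ?_⟩
  have hcop_n : ((range n : Finset ℕ) : Set ℕ).Pairwise (Nat.Coprime on k) :=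
    fun i _ j _ hij ↦ hcop i j hij
  have hupper : ∀ Y : Set ℕ, μ Y ≤ ∏ i ∈ range n, (wk μ (k i) Y : ℝ) / k i :=
    fun Y ↦ hμ.le_prod_wk_div Y k _ (fun i _ ↦ hpos i) hcop_n
  have hratio : ∀ i, 0 ≤ (wk μ (k i) Xᶜ : ℝ) / k i ∧ (wk μ (k i) Xᶜ : ℝ) / k i ≤ 1 := fun i ↦
    ⟨by positivity, div_le_one_of_le₀ (by exact_mod_cast wk_le_self μ (k i) Xᶜ) (by positivity)⟩
  refine ⟨?_, hμ.1.one_sub_apply_compl_le X, hupper X⟩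
  calc ∏ i ∈ range n, (1 - (wk μ (k i) Xᶜ : ℝ) / k i)
      ≤ 1 - ∏ i ∈ range n, (wk μ (k i) Xᶜ : ℝ) / k i :=
        prod_one_sub_le_one_sub_prod (nonempty_range_iff.mpr hn.ne')
          (fun i _ ↦ (hratio i).1) (fun i _ ↦ (hratio i).2)
    _ ≤ 1 - μ Xᶜ := sub_le_sub_left (hupper Xᶜ) 1
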